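/- arXiv:1305.6875 — 2 statements merged into one kernel-verified Lean document; each statement's English description precedes it below -/
import Mathlib

section
/- Let c > 0, let E : ℝ × ℝ³ → ℝ³ be a smooth vector field, and let φ : ℝ × ℝ³ → ℝ be a smooth solution of the wave equation Δφ − c⁻² ∂_t² φ + div E = 0 satisfying ∂_t φ(0, x) = 0 for all x ∈ ℝ³. Define ψ(t,x) := ∫₀ᵗ φ(s,x) ds and A_j(t,x) := −∫₀ᵗ E_j(s,x) ds − ∂_j ψ(t,x) for j = 1,2,3. Then the pair (A, φ) is smooth and solves the first-order hyperbolic system ∂_t A + ∇φ = −E together with the Lorenz gauge condition div A + c⁻² ∂_t φ = 0 everywhere. (The explicit construction of a Lorentzian 4-potential in the proof of the paper's Theorem on Lorentzian 4-potentials.) -/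
/-!
Put `W := -(E + ∇φ)`. Since `∇ψ = ∫₀ᵗ ∇φ ds`, the definition of `A` reads
`A(t,x) = ∫₀ᵗ W(s,x) ds`. Hence `∂ₜA = W`, which is the first equation, and
`div A = ∫₀ᵗ div W ds = -∫₀ᵗ (div E + Δφ) ds = -c⁻² ∫₀ᵗ ∂ₜ²φ ds = -c⁻² ∂ₜφ` by the wave equation
and `∂ₜφ(0,·) = 0`. Time primitives of smooth fields are smooth: after the substitution
`∫₀ᵗ f(s,x) ds = ∫₀¹ t f(tu,x) du` one differentiates under the integral sign over a fixed
interval.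
-/

open scoped BigOperators

noncomputable section

/-- Points of space-time: time paired with a spatial point. -/
abbrev SpaceTime : Type := ℝ × (Fin 3 → ℝ)

/-- Spatial partial derivative in coordinate direction `j`. -/
def pd (j : Fin 3) (f : (Fin 3 → ℝ) → ℝ) (x : Fin 3 → ℝ) : ℝ :=
  fderiv ℝ f x (Pi.single j 1)

/-- Spatial divergence of a time-dependent vector field. -/
def div3 (F : SpaceTime → (Fin 3 → ℝ)) (t : ℝ) (x : Fin 3 → ℝ) : ℝ :=
  ∑ j : Fin 3, pd j (fun y => F (t, y) j) x

/-- `j`-th component of the spatial curl of a time-dependent vector field. -/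
def curl3 (F : SpaceTime → (Fin 3 → ℝ)) (t : ℝ) (x : Fin 3 → ℝ) (j : Fin 3) : ℝ :=
  pd (j + 1) (fun y => F (t, y) (j + 2)) x - pd (j + 2) (fun y => F (t, y) (j + 1)) x

/-- `j`-th component of the spatial gradient of a time-dependent scalar field. -/
def grad3 (f : SpaceTime → ℝ) (t : ℝ) (x : Fin 3 → ℝ) (j : Fin 3) : ℝ :=
  pd j (fun y => f (t, y)) x

/-- Time derivative of a time-dependent scalar field. -/
def dt1 (f : SpaceTime → ℝ) (t : ℝ) (x : Fin 3 → ℝ) : ℝ :=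
  deriv (fun s => f (s, x)) t

/-- Second time derivative of a time-dependent scalar field. -/
def dt2 (f : SpaceTime → ℝ) (t : ℝ) (x : Fin 3 → ℝ) : ℝ :=
  deriv (fun s => dt1 f s x) t

/-- Spatial Laplacian of a time-dependent scalar field. -/
def lap3 (f : SpaceTime → ℝ) (t : ℝ) (x : Fin 3 → ℝ) : ℝ :=
  ∑ j : Fin 3, pd j (fun y => pd j (fun z => f (t, z)) y) x

universe u

open intervalIntegral MeasureTheory Set Filter Topology

section ParametricIntegral

theorem IsCompact.exists_eventually_forall_norm_le {X Y E : Type*} [TopologicalSpace X]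
    [TopologicalSpace Y] [SeminormedAddCommGroup E] {K : Set Y} (hK : IsCompact K)
    {G : Y × X → E} (hG : Continuous G) (x₀ : X) :
    ∃ C, ∀ᶠ x in 𝓝 x₀, ∀ u ∈ K, ‖G (u, x)‖ ≤ C := by
  obtain ⟨M, hM⟩ := hK.exists_bound_of_continuousOn
    (hG.comp (Continuous.prodMk_left x₀)).continuousOn
  refine ⟨M + 1, hK.eventually_forall_of_forall_eventually fun u hu => ?_⟩
  have hlt : ‖G (u, x₀)‖ < M + 1 := (hM u hu).trans_lt (lt_add_one M)
  exact ((hG.comp continuous_swap).norm.continuousAt.eventually (gt_mem_nhds hlt)).mono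
    fun _ h => h.le

variable {H F : Type u} [NormedAddCommGroup H] [NormedSpace ℝ H]
  [NormedAddCommGroup F] [NormedSpace ℝ F]

theorem fderiv_slice_apply {f : ℝ × H → F} {t : ℝ} {x : H} (hf : DifferentiableAt ℝ f (t, x))
    (v : H) : fderiv ℝ (fun y => f (t, y)) x v = fderiv ℝ f (t, x) (0, v) := by
  rw [HasFDerivAt.fderiv (f := fun y => f (t, y))
    (hf.hasFDerivAt.comp x (hasFDerivAt_prodMk_right t x))]
  rfl

theorem hasFDerivAt_intervalIntegral_of_contDiff {g : ℝ × H → F} (hg : ContDiff ℝ 1 g)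
    (a b : ℝ) (x₀ : H) :
    HasFDerivAt (fun x => ∫ u in a..b, g (u, x))
      (∫ u in a..b, fderiv ℝ g (u, x₀) ∘L ContinuousLinearMap.inr ℝ ℝ H) x₀ := by
  have hg' : Continuous fun q => fderiv ℝ g q ∘L ContinuousLinearMap.inr ℝ ℝ H :=
    (hg.continuous_fderiv one_ne_zero).clm_comp continuous_const
  obtain ⟨C, hC⟩ := isCompact_uIcc.exists_eventually_forall_norm_le hg' x₀
  refine hasFDerivAt_integral_of_dominated_of_fderiv_le (bound := fun _ => C) hC
    (Eventually.of_forall fun x =>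
      (hg.continuous.comp (Continuous.prodMk_left x)).aestronglyMeasurable)
    ((hg.continuous.comp (Continuous.prodMk_left x₀)).intervalIntegrable a b)
    (hg'.comp (Continuous.prodMk_left x₀)).aestronglyMeasurable
    (Eventually.of_forall fun u hu x hx => hx u (uIoc_subset_uIcc hu))
    intervalIntegrable_const
    (Eventually.of_forall fun u _ x _ => ?_)
  exact (hg.differentiable_one (u, x)).hasFDerivAt.comp x (hasFDerivAt_prodMk_right u x)

theorem contDiff_intervalIntegral_of_contDiff {n : ℕ} {g : ℝ × H → F} (hg : ContDiff ℝ n g)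
    (a b : ℝ) : ContDiff ℝ n fun x => ∫ u in a..b, g (u, x) := by
  induction n generalizing F with
  | zero =>
    exact contDiff_zero.2 (continuous_parametric_intervalIntegral_of_continuous'
      (f := fun x u => g (u, x)) (hg.continuous.comp continuous_swap) a b)
  | succ n ih =>
    have hderiv : ContDiff ℝ n fun q => fderiv ℝ g q ∘L ContinuousLinearMap.inr ℝ ℝ H :=
      (hg.fderiv_right le_rfl).clm_comp contDiff_const
    exact contDiff_succ_iff_hasFDerivAt.2 ⟨_, ih hderiv,
      hasFDerivAt_intervalIntegral_of_contDiff (hg.of_le (by simp)) a b⟩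

theorem fderiv_intervalIntegral_apply {g : ℝ × H → F} (hg : ContDiff ℝ 1 g) (a b : ℝ)
    (x v : H) :
    fderiv ℝ (fun x => ∫ u in a..b, g (u, x)) x v = ∫ u in a..b, fderiv ℝ g (u, x) (0, v) := by
  have hcont : Continuous fun u => fderiv ℝ g (u, x) ∘L ContinuousLinearMap.inr ℝ ℝ H :=
    ((hg.continuous_fderiv one_ne_zero).clm_comp continuous_const).comp
      (Continuous.prodMk_left x)
  rw [(hasFDerivAt_intervalIntegral_of_contDiff hg a b x).fderiv,
    ContinuousLinearMap.intervalIntegral_apply (hcont.intervalIntegrable a b)]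
  rfl

theorem contDiff_primitive {n : ℕ∞} {f : ℝ × H → F} (hf : ContDiff ℝ n f) :
    ContDiff ℝ n fun p : ℝ × H => ∫ s in 0..p.1, f (s, p.2) := by
  have hrescale : (fun p : ℝ × H => ∫ s in 0..p.1, f (s, p.2)) =
      fun p => ∫ u in 0..1, p.1 • f (p.1 * u, p.2) := by
    funext p
    rw [intervalIntegral.integral_smul]
    simpa using (smul_integral_comp_mul_left (fun s => f (s, p.2)) p.1 (a := 0) (b := 1)).symm
  have hg : ContDiff ℝ n fun q : ℝ × (ℝ × H) => q.2.1 • f (q.2.1 * q.1, q.2.2) := by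
    fun_prop
  rw [hrescale, contDiff_iff_forall_nat_le]
  exact fun m hm => contDiff_intervalIntegral_of_contDiff (hg.of_le (by exact_mod_cast hm)) 0 1

end ParametricIntegral

section SpaceTime

variable {f g : SpaceTime → ℝ}

theorem grad3_eq_fderiv (hf : Differentiable ℝ f) (t : ℝ) (x : Fin 3 → ℝ) (j : Fin 3) :
    grad3 f t x j = fderiv ℝ f (t, x) (0, Pi.single j 1) :=
  fderiv_slice_apply (hf (t, x)) _

theorem contDiff_grad3 {m n : WithTop ℕ∞} (hf : ContDiff ℝ n f) (hmn : m + 1 ≤ n) (j : Fin 3) :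
    ContDiff ℝ m fun p : SpaceTime => grad3 f p.1 p.2 j := by
  simp only [grad3_eq_fderiv (hf.differentiable (ne_bot_of_le_ne_bot (by simp) hmn))]
  exact (hf.fderiv_right hmn).clm_apply contDiff_const

theorem continuous_grad3 (hf : ContDiff ℝ 1 f) (j : Fin 3) :
    Continuous fun p : SpaceTime => grad3 f p.1 p.2 j :=
  (contDiff_grad3 hf (zero_add 1).le j).continuous

theorem grad3_neg (t : ℝ) (x : Fin 3 → ℝ) (j : Fin 3) :
    grad3 (fun p => -f p) t x j = -grad3 f t x j := by
  simp only [grad3, pd, fderiv_fun_neg, neg_apply]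

theorem grad3_add (hf : Differentiable ℝ f) (hg : Differentiable ℝ g)
    (t : ℝ) (x : Fin 3 → ℝ) (j : Fin 3) :
    grad3 (fun p => f p + g p) t x j = grad3 f t x j + grad3 g t x j := by
  rw [grad3_eq_fderiv (f := fun p => f p + g p) (hf.add hg), fderiv_fun_add (hf _) (hg _),
    grad3_eq_fderiv hf, grad3_eq_fderiv hg, add_apply]

theorem pd_intervalIntegral (hf : ContDiff ℝ 1 f) (t : ℝ) (x : Fin 3 → ℝ) (j : Fin 3) :
    pd j (fun y => ∫ s in (0:ℝ)..t, f (s, y)) x = ∫ s in (0:ℝ)..t, grad3 f s x j := by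
  simp only [pd, fderiv_intervalIntegral_apply hf, grad3_eq_fderiv hf.differentiable_one]

theorem integral_dt2 (hf : ContDiff ℝ 2 f) (a b : ℝ) (x : Fin 3 → ℝ) :
    ∫ s in a..b, dt2 f s x = dt1 f b x - dt1 f a x := by
  have hslice : ContDiff ℝ (1 + 1) fun s => f (s, x) :=
    hf.comp (contDiff_id.prodMk contDiff_const)
  exact integral_deriv_of_contDiffOn_uIcc hslice.deriv'.contDiffOn

theorem div3_neg_add_grad3 {E : SpaceTime → (Fin 3 → ℝ)} (hE : ContDiff ℝ 1 E)
    (hf : ContDiff ℝ 2 f) (t : ℝ) (x : Fin 3 → ℝ) :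
    div3 (fun p j => -(E p j + grad3 f p.1 p.2 j)) t x = -(div3 E t x + lap3 f t x) := by
  have hgrad (j : Fin 3) : ContDiff ℝ 1 fun p : SpaceTime => grad3 f p.1 p.2 j :=
    contDiff_grad3 hf le_rfl j
  change ∑ j, grad3 (fun p => -(E p j + grad3 f p.1 p.2 j)) t x j = _
  simp only [grad3_neg, Finset.sum_neg_distrib]
  rw [Finset.sum_congr rfl fun j _ => grad3_add ((contDiff_pi.1 hE j).differentiable_one)
    (hgrad j).differentiable_one t x j, Finset.sum_add_distrib]
  rfl

variable {W A : SpaceTime → (Fin 3 → ℝ)}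

theorem contDiff_of_eq_primitive {n : ℕ∞} (hW : ContDiff ℝ n W)
    (hA : ∀ t x j, A (t, x) j = ∫ s in (0:ℝ)..t, W (s, x) j) : ContDiff ℝ n A := by
  have hA_fun : A = fun p j => ∫ s in (0:ℝ)..p.1, W (s, p.2) j :=
    funext fun p => funext (hA p.1 p.2)
  rw [hA_fun]
  exact contDiff_pi.2 fun j => contDiff_primitive (contDiff_pi.1 hW j)

theorem dt1_of_eq_primitive (hW : Continuous W)
    (hA : ∀ t x j, A (t, x) j = ∫ s in (0:ℝ)..t, W (s, x) j)
    (t : ℝ) (x : Fin 3 → ℝ) (j : Fin 3) :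
    dt1 (fun p => A p j) t x = W (t, x) j := by
  simp only [dt1, hA]
  exact ((continuous_apply j).comp (hW.comp (Continuous.prodMk_left x))).deriv_integral _ 0 t

theorem div3_of_eq_primitive (hW : ContDiff ℝ 1 W)
    (hA : ∀ t x j, A (t, x) j = ∫ s in (0:ℝ)..t, W (s, x) j) (t : ℝ) (x : Fin 3 → ℝ) :
    div3 A t x = ∫ s in (0:ℝ)..t, div3 W s x := by
  have hint (j : Fin 3) :
      IntervalIntegrable (fun s => pd j (fun y => W (s, y) j) x) volume 0 t :=
    ((continuous_grad3 (contDiff_pi.1 hW j) j).comp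
      (Continuous.prodMk_left x)).intervalIntegrable 0 t
  simp only [div3]
  rw [intervalIntegral.integral_finsetSum fun j _ => hint j]
  refine Finset.sum_congr rfl fun j _ => ?_
  simp only [hA]
  exact pd_intervalIntegral (contDiff_pi.1 hW j) t x j

theorem potential_eq_primitive {E : SpaceTime → (Fin 3 → ℝ)} (hE : Continuous E)
    (hf : ContDiff ℝ 1 f) {ψ : SpaceTime → ℝ}
    (hψ : ∀ t x, ψ (t, x) = ∫ s in (0:ℝ)..t, f (s, x))
    (hA : ∀ t x j, A (t, x) j = -(∫ s in (0:ℝ)..t, E (s, x) j) - pd j (fun y => ψ (t, y)) x)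
    (t : ℝ) (x : Fin 3 → ℝ) (j : Fin 3) :
    A (t, x) j = ∫ s in (0:ℝ)..t, -(E (s, x) j + grad3 f s x j) := by
  have hslice {g : SpaceTime → ℝ} (hg : Continuous g) :
      IntervalIntegrable (fun s => g (s, x)) volume 0 t :=
    (hg.comp (Continuous.prodMk_left x)).intervalIntegrable 0 t
  rw [hA, show (fun y => ψ (t, y)) = _ from funext (hψ t), pd_intervalIntegral hf,
    intervalIntegral.integral_neg, intervalIntegral.integral_add
      (hslice (g := fun p => E p j) ((continuous_apply j).comp hE))
      (hslice (continuous_grad3 hf j))]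
  ring

end SpaceTime

theorem potential_construction_general
    (c : ℝ)
    (E : SpaceTime → (Fin 3 → ℝ)) (hE : ContDiff ℝ (⊤ : ℕ∞) E)
    (φ : SpaceTime → ℝ) (hφ : ContDiff ℝ (⊤ : ℕ∞) φ)
    (hwave : ∀ (t : ℝ) (x : Fin 3 → ℝ),
      lap3 φ t x - c⁻¹ ^ 2 * dt2 φ t x + div3 E t x = 0)
    (hinit : ∀ x : Fin 3 → ℝ, dt1 φ 0 x = 0)
    (ψ : SpaceTime → ℝ)
    (hψ : ∀ (t : ℝ) (x : Fin 3 → ℝ), ψ (t, x) = ∫ s in (0:ℝ)..t, φ (s, x))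
    (A : SpaceTime → (Fin 3 → ℝ))
    (hA : ∀ (t : ℝ) (x : Fin 3 → ℝ) (j : Fin 3),
      A (t, x) j = -(∫ s in (0:ℝ)..t, E (s, x) j) - pd j (fun y => ψ (t, y)) x) :
    ContDiff ℝ (⊤ : ℕ∞) A ∧
    (∀ (t : ℝ) (x : Fin 3 → ℝ) (j : Fin 3),
      dt1 (fun p => A p j) t x + grad3 φ t x j = -E (t, x) j) ∧
    (∀ (t : ℝ) (x : Fin 3 → ℝ),
      div3 A t x + c⁻¹ ^ 2 * dt1 φ t x = 0) := by
  set W : SpaceTime → (Fin 3 → ℝ) := fun p j => -(E p j + grad3 φ p.1 p.2 j)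
  have hW : ContDiff ℝ (⊤ : ℕ∞) W :=
    contDiff_pi.2 fun j => ((contDiff_pi.1 hE j).add (contDiff_grad3 hφ le_rfl j)).neg
  have hA_eq := potential_eq_primitive hE.continuous (contDiff_infty.1 hφ 1) hψ hA
  have hdiv_W (s : ℝ) (x : Fin 3 → ℝ) : div3 W s x = -(c⁻¹ ^ 2 * dt2 φ s x) := by
    rw [div3_neg_add_grad3 (contDiff_infty.1 hE 1) (contDiff_infty.1 hφ 2)]
    linarith [hwave s x]
  refine ⟨contDiff_of_eq_primitive hW hA_eq, fun t x j => ?_, fun t x => ?_⟩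
  · rw [dt1_of_eq_primitive hW.continuous hA_eq]
    ring
  · rw [div3_of_eq_primitive (contDiff_infty.1 hW 1) hA_eq,
      intervalIntegral.integral_congr fun s _ => hdiv_W s x, intervalIntegral.integral_neg,
      intervalIntegral.integral_const_mul, integral_dt2 (contDiff_infty.1 hφ 2), hinit]
    ring

/-- explicit construction of a Lorentzian 4-potential from a
solution `φ` of the wave equation with `∂ₜφ(0,·) = 0`:
with `ψ(t,x) = ∫₀ᵗ φ(s,x) ds` and `Aⱼ = -∫₀ᵗ Eⱼ ds - ∂ⱼψ`, the pair `(A, φ)`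
is smooth and solves `∂ₜA + ∇φ = -E` together with the Lorenz gauge. -/
theorem potential_construction
    (c : ℝ) (hc : 0 < c)
    (E : SpaceTime → (Fin 3 → ℝ)) (hE : ContDiff ℝ (⊤ : ℕ∞) E)
    (φ : SpaceTime → ℝ) (hφ : ContDiff ℝ (⊤ : ℕ∞) φ)
    (hwave : ∀ (t : ℝ) (x : Fin 3 → ℝ),
      lap3 φ t x - c⁻¹ ^ 2 * dt2 φ t x + div3 E t x = 0)
    (hinit : ∀ x : Fin 3 → ℝ, dt1 φ 0 x = 0)
    (ψ : SpaceTime → ℝ)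
    (hψ : ∀ (t : ℝ) (x : Fin 3 → ℝ), ψ (t, x) = ∫ s in (0:ℝ)..t, φ (s, x))
    (A : SpaceTime → (Fin 3 → ℝ))
    (hA : ∀ (t : ℝ) (x : Fin 3 → ℝ) (j : Fin 3),
      A (t, x) j = -(∫ s in (0:ℝ)..t, E (s, x) j) - pd j (fun y => ψ (t, y)) x) :
    ContDiff ℝ (⊤ : ℕ∞) A ∧
    (∀ (t : ℝ) (x : Fin 3 → ℝ) (j : Fin 3),
      dt1 (fun p => A p j) t x + grad3 φ t x j = -E (t, x) j) ∧
    (∀ (t : ℝ) (x : Fin 3 → ℝ),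
      div3 A t x + c⁻¹ ^ 2 * dt1 φ t x = 0) :=
  potential_construction_general c E hE φ hφ hwave hinit ψ hψ A hA
end
end

section
/- Let G, c > 0 and set μ_g := 4πG/c² and ε_g := 1/(4πG) (so ε_g μ_g c² = 1). Let A : ℝ × ℝ³ → ℝ³ and φ : ℝ × ℝ³ → ℝ be smooth fields satisfying the Lorenz gauge condition div A + c⁻² ∂_t φ = 0. Set F := −∇φ − ∂_t A (the gravitational field) and B := curl A, and suppose the Maxwell–Heaviside equations hold for a smooth momentum density p : ℝ × ℝ³ → ℝ³ and mass density ρ : ℝ × ℝ³ → ℝ: μ_g⁻¹ curl B − ε_g ∂_t F = −p and ε_g div F = −ρ. Then for j = 1,2,3, Δ A_j − c⁻² ∂_t² A_j = μ_g p_j, and Δφ − c⁻² ∂_t² φ = 4πG ρ, everywhere. (The wave equations of the paper's Theorem on the Maxwell–Heaviside equations for gravity, in vector-calculus form; in the static limit the second equation reduces to the Newtonian Poisson equation Δφ = 4πGρ.) -/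
open scoped BigOperators

noncomputable section

/-! In the Lorenz gauge the Maxwell–Heaviside equations decouple into wave equations for the
potentials. Every spatial or time derivative is a directional derivative `fderiv ℝ f q v` on
space-time, and for `C²` potentials the second derivatives commute. Hence
`curl (curl A) = ∇(div A) - ΔA`, `div F = -Δφ - ∂ₜ(div A)` and `∂ₜF = -∇(∂ₜφ) - ∂ₜ²A`.
Substituting `div A = -c⁻²∂ₜφ` in the Ampère and Gauss laws, the `∇(∂ₜφ)` terms cancel since
`ε_g μ_g c² = 1`, and what remains are the two wave equations. -/

open Function

section DirDeriv

variable {E : Type*} [NormedAddCommGroup E] [NormedSpace ℝ E]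

def dirDeriv (v : E) (f : E → ℝ) : E → ℝ := fun q => fderiv ℝ f q v

theorem ContDiff.differentiable_dirDeriv {f : E → ℝ} (hf : ContDiff ℝ 2 f) (v : E) :
    Differentiable ℝ (dirDeriv v f) :=
  fun q => ((hf.fderiv_right (m := 1) le_rfl).differentiable one_ne_zero q).clm_apply
    (differentiableAt_const v)

theorem dirDeriv_comm {f : E → ℝ} (hf : ContDiff ℝ 2 f) (v w : E) :
    dirDeriv v (dirDeriv w f) = dirDeriv w (dirDeriv v f) := by
  ext q
  have hf' : DifferentiableAt ℝ (fderiv ℝ f) q :=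
    (hf.fderiv_right (m := 1) le_rfl).differentiable one_ne_zero q
  have hsnd : ∀ u z, dirDeriv u (dirDeriv z f) q = fderiv ℝ (fderiv ℝ f) q u z := fun u z => by
    change fderiv ℝ (fun y => fderiv ℝ f y z) q u = _
    simp [fderiv_clm_apply hf' (differentiableAt_const z)]
  rw [hsnd, hsnd, hf.contDiffAt.isSymmSndFDerivAt (by simp)]

theorem dirDeriv_sub {f g : E → ℝ} (hf : Differentiable ℝ f) (hg : Differentiable ℝ g) (v : E) :
    dirDeriv v (fun q => f q - g q) = fun q => dirDeriv v f q - dirDeriv v g q := by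
  ext q
  simp [dirDeriv, fderiv_fun_sub (hf q) (hg q)]

theorem dirDeriv_neg (f : E → ℝ) (v : E) :
    dirDeriv v (fun q => -f q) = fun q => -dirDeriv v f q := by
  ext q
  simp [dirDeriv, fderiv_fun_neg]

theorem dirDeriv_sum {ι : Type*} (s : Finset ι) {f : ι → E → ℝ}
    (hf : ∀ i ∈ s, Differentiable ℝ (f i)) (v : E) :
    dirDeriv v (fun q => ∑ i ∈ s, f i q) = fun q => ∑ i ∈ s, dirDeriv v (f i) q := by
  ext q
  simp [dirDeriv, fderiv_fun_sum fun i hi => hf i hi q]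

end DirDeriv

abbrev timeDir : SpaceTime := (1, 0)

abbrev spaceDir (j : Fin 3) : SpaceTime := (0, Pi.single j 1)

section SpaceTime

variable {f : SpaceTime → ℝ} {A : SpaceTime → Fin 3 → ℝ} {t : ℝ} {x : Fin 3 → ℝ}

theorem pd_slice_eq_dirDeriv (hf : DifferentiableAt ℝ f (t, x)) (j : Fin 3) :
    pd j (fun y => f (t, y)) x = dirDeriv (spaceDir j) f (t, x) := by
  have h : HasFDerivAt (fun y => f (t, y))
      ((fderiv ℝ f (t, x)).comp ((0 : (Fin 3 → ℝ) →L[ℝ] ℝ).prod (.id ℝ _))) x :=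
    hf.hasFDerivAt.comp x ((hasFDerivAt_const t x).prodMk (hasFDerivAt_id x))
  simp [pd, h.fderiv, dirDeriv]

theorem dt1_eq_dirDeriv (hf : DifferentiableAt ℝ f (t, x)) :
    dt1 f t x = dirDeriv timeDir f (t, x) := by
  have h : HasFDerivAt (fun s => f (s, x))
      ((fderiv ℝ f (t, x)).comp ((ContinuousLinearMap.id ℝ ℝ).prod 0)) t :=
    hf.hasFDerivAt.comp t ((hasFDerivAt_id t).prodMk (hasFDerivAt_const x t))
  simp [dt1, ← fderiv_apply_one_eq_deriv, h.fderiv, dirDeriv]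

theorem grad3_eq_dirDeriv (hf : Differentiable ℝ f) (j : Fin 3) :
    grad3 f t x j = dirDeriv (spaceDir j) f (t, x) :=
  pd_slice_eq_dirDeriv (hf _) j

theorem div3_eq_sum_dirDeriv (hA : Differentiable ℝ A) :
    div3 A t x = ∑ k, dirDeriv (spaceDir k) (fun q => A q k) (t, x) :=
  Finset.sum_congr rfl fun k _ => pd_slice_eq_dirDeriv (f := fun q => A q k)
    (differentiable_pi.1 hA k _) k

theorem curl3_eq_dirDeriv (hA : Differentiable ℝ A) (j : Fin 3) :
    curl3 A t x j = dirDeriv (spaceDir (j + 1)) (fun q => A q (j + 2)) (t, x)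
      - dirDeriv (spaceDir (j + 2)) (fun q => A q (j + 1)) (t, x) := by
  rw [curl3, pd_slice_eq_dirDeriv (f := fun q => A q (j + 2)) (differentiable_pi.1 hA _ _),
    pd_slice_eq_dirDeriv (f := fun q => A q (j + 1)) (differentiable_pi.1 hA _ _)]

theorem lap3_eq_sum_dirDeriv (hf : ContDiff ℝ 2 f) :
    lap3 f t x = ∑ k, dirDeriv (spaceDir k) (dirDeriv (spaceDir k) f) (t, x) := by
  refine Finset.sum_congr rfl fun k _ => ?_
  have hslice : (fun y => pd k (fun z => f (t, z)) y) = fun y => dirDeriv (spaceDir k) f (t, y) :=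
    funext fun y => pd_slice_eq_dirDeriv (hf.differentiable two_ne_zero _) k
  rw [hslice, pd_slice_eq_dirDeriv (hf.differentiable_dirDeriv _ _)]

theorem dt2_eq_dirDeriv (hf : ContDiff ℝ 2 f) :
    dt2 f t x = dirDeriv timeDir (dirDeriv timeDir f) (t, x) := by
  have hslice : (fun s => dt1 f s x) = fun s => dirDeriv timeDir f (s, x) :=
    funext fun s => dt1_eq_dirDeriv (hf.differentiable two_ne_zero _)
  rw [dt2, hslice]
  exact dt1_eq_dirDeriv (hf.differentiable_dirDeriv _ _)

theorem uncurry_dt1 (hf : Differentiable ℝ f) : uncurry (dt1 f) = dirDeriv timeDir f :=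
  funext fun _ => dt1_eq_dirDeriv (hf _)

theorem uncurry_div3 (hA : Differentiable ℝ A) :
    uncurry (div3 A) = fun q => ∑ k, dirDeriv (spaceDir k) (fun r => A r k) q :=
  funext fun _ => div3_eq_sum_dirDeriv hA

theorem uncurry_curl3 (hA : Differentiable ℝ A) :
    uncurry (curl3 A) = fun q j => dirDeriv (spaceDir (j + 1)) (fun r => A r (j + 2)) q
      - dirDeriv (spaceDir (j + 2)) (fun r => A r (j + 1)) q :=
  funext fun _ => funext fun j => curl3_eq_dirDeriv hA j

theorem grad3_const_mul (a : ℝ) (j : Fin 3) :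
    grad3 (fun q => a * f q) t x j = a * grad3 f t x j := by
  change fderiv ℝ (a • fun y => f (t, y)) x _ = _
  rw [fderiv_const_smul_field]
  rfl

theorem dt1_const_mul (a : ℝ) : dt1 (fun q => a * f q) t x = a * dt1 f t x :=
  congrFun (deriv_const_mul_field' a) t

theorem dt1_uncurry_dt1 : dt1 (uncurry (dt1 f)) = dt2 f := rfl

end SpaceTime

/-- With `d i k l` standing for `∂ᵢ∂ₖAₗ`, the left side is `(curl (curl A))ⱼ` in the index
convention of `curl3`. -/
theorem curl_curl_of_symm (d : Fin 3 → Fin 3 → Fin 3 → ℝ) (hd : ∀ i k l, d i k l = d k i l)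
    (j : Fin 3) :
    (d (j + 1) (j + 2 + 1) (j + 2 + 2) - d (j + 1) (j + 2 + 2) (j + 2 + 1))
      - (d (j + 2) (j + 1 + 1) (j + 1 + 2) - d (j + 2) (j + 1 + 2) (j + 1 + 1))
      = ∑ k, d j k k - ∑ k, d k k j := by
  have hswap : d (j + 1) j (j + 1) + d (j + 2) j (j + 2)
      = d j (j + 1) (j + 1) + d j (j + 2) (j + 2) := by
    rw [hd (j + 1), hd (j + 2)]
  fin_cases j <;> simp [Fin.sum_univ_three] at hswap ⊢ <;> linarith

theorem ContDiff.differentiable_uncurry_div3 {A : SpaceTime → Fin 3 → ℝ} (hA : ContDiff ℝ 2 A) :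
    Differentiable ℝ (uncurry (div3 A)) := by
  rw [uncurry_div3 (hA.differentiable two_ne_zero)]
  exact .fun_sum fun k _ => (contDiff_pi.1 hA k).differentiable_dirDeriv _

theorem curl3_uncurry_curl3 {A : SpaceTime → Fin 3 → ℝ} (hA : ContDiff ℝ 2 A) (t : ℝ)
    (x : Fin 3 → ℝ) (j : Fin 3) :
    curl3 (uncurry (curl3 A)) t x j
      = grad3 (uncurry (div3 A)) t x j - lap3 (fun q => A q j) t x := by
  have hAk (k : Fin 3) : ContDiff ℝ 2 fun q => A q k := contDiff_pi.1 hA k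
  have hdA (k l : Fin 3) : Differentiable ℝ (dirDeriv (spaceDir k) fun q => A q l) :=
    (hAk l).differentiable_dirDeriv _
  have hA1 := hA.differentiable two_ne_zero
  have hcurl : Differentiable ℝ (uncurry (curl3 A)) := by
    rw [uncurry_curl3 hA1]
    exact differentiable_pi.2 fun m => (hdA _ _).sub (hdA _ _)
  rw [curl3_eq_dirDeriv hcurl, grad3_eq_dirDeriv hA.differentiable_uncurry_div3,
    uncurry_curl3 hA1, uncurry_div3 hA1, dirDeriv_sub (hdA _ _) (hdA _ _), dirDeriv_sub (hdA _ _) (hdA _ _),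
    dirDeriv_sum _ (fun k _ => hdA k k), lap3_eq_sum_dirDeriv (hAk j)]
  exact curl_curl_of_symm
    (fun i k l => dirDeriv (spaceDir i) (dirDeriv (spaceDir k) fun q => A q l) (t, x))
    (fun i k l => by rw [dirDeriv_comm (hAk l)]) j

def fieldOfPotentials (φ : SpaceTime → ℝ) (A : SpaceTime → Fin 3 → ℝ) :
    SpaceTime → Fin 3 → ℝ :=
  fun q j => -grad3 φ q.1 q.2 j - dt1 (fun r => A r j) q.1 q.2

section FieldOfPotentials

variable {φ : SpaceTime → ℝ} {A : SpaceTime → Fin 3 → ℝ}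

theorem fieldOfPotentials_eq (hφ : Differentiable ℝ φ) (hA : Differentiable ℝ A) :
    fieldOfPotentials φ A
      = fun q j => -dirDeriv (spaceDir j) φ q - dirDeriv timeDir (fun r => A r j) q :=
  funext fun _ => funext fun j => by
    rw [fieldOfPotentials, grad3_eq_dirDeriv hφ, dt1_eq_dirDeriv (differentiable_pi.1 hA j _)]

theorem differentiable_fieldOfPotentials (hφ : ContDiff ℝ 2 φ) (hA : ContDiff ℝ 2 A) :
    Differentiable ℝ (fieldOfPotentials φ A) := by
  rw [fieldOfPotentials_eq (hφ.differentiable two_ne_zero) (hA.differentiable two_ne_zero)]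
  exact differentiable_pi.2 fun j =>
    (hφ.differentiable_dirDeriv _).neg.sub ((contDiff_pi.1 hA j).differentiable_dirDeriv _)

theorem div3_fieldOfPotentials (hφ : ContDiff ℝ 2 φ) (hA : ContDiff ℝ 2 A) (t : ℝ)
    (x : Fin 3 → ℝ) :
    div3 (fieldOfPotentials φ A) t x = -lap3 φ t x - dt1 (uncurry (div3 A)) t x := by
  have hAk (k : Fin 3) : ContDiff ℝ 2 fun q => A q k := contDiff_pi.1 hA k
  have hA1 := hA.differentiable two_ne_zero
  rw [div3_eq_sum_dirDeriv (differentiable_fieldOfPotentials hφ hA),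
    dt1_eq_dirDeriv (hA.differentiable_uncurry_div3 _), uncurry_div3 hA1,
    dirDeriv_sum _ fun k _ => (hAk k).differentiable_dirDeriv _, lap3_eq_sum_dirDeriv hφ,
    ← Finset.sum_neg_distrib, ← Finset.sum_sub_distrib,
    fieldOfPotentials_eq (hφ.differentiable two_ne_zero) hA1]
  refine Finset.sum_congr rfl fun k _ => ?_
  beta_reduce
  rw [dirDeriv_sub (hφ.differentiable_dirDeriv _).fun_neg ((hAk k).differentiable_dirDeriv _),
    dirDeriv_neg, dirDeriv_comm (hAk k)]

theorem dt1_fieldOfPotentials (hφ : ContDiff ℝ 2 φ) (hA : ContDiff ℝ 2 A) (t : ℝ)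
    (x : Fin 3 → ℝ) (j : Fin 3) :
    dt1 (fun q => fieldOfPotentials φ A q j) t x
      = -grad3 (uncurry (dt1 φ)) t x j - dt2 (fun q => A q j) t x := by
  have hAj : ContDiff ℝ 2 fun q => A q j := contDiff_pi.1 hA j
  have hφ1 := hφ.differentiable two_ne_zero
  rw [dt1_eq_dirDeriv (differentiable_pi.1 (differentiable_fieldOfPotentials hφ hA) j _),
    fieldOfPotentials_eq hφ1 (hA.differentiable two_ne_zero)]
  beta_reduce
  rw [dirDeriv_sub (hφ.differentiable_dirDeriv _).fun_neg (hAj.differentiable_dirDeriv _),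
    dirDeriv_neg, uncurry_dt1 hφ1, grad3_eq_dirDeriv (hφ.differentiable_dirDeriv _),
    dt2_eq_dirDeriv hAj, dirDeriv_comm hφ]

end FieldOfPotentials

theorem maxwell_heaviside_wave_equations_general
    (G c : ℝ) (hG : 0 < G) (hc : 0 < c)
    (μg εg : ℝ) (hμg : μg = 4 * Real.pi * G / c ^ 2)
    (hεg : εg = 1 / (4 * Real.pi * G))
    (A : SpaceTime → (Fin 3 → ℝ)) (φ : SpaceTime → ℝ)
    (hA : ContDiff ℝ (⊤ : ℕ∞) A) (hφ : ContDiff ℝ (⊤ : ℕ∞) φ)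
    (hgauge : ∀ (t : ℝ) (x : Fin 3 → ℝ),
      div3 A t x + c⁻¹ ^ 2 * dt1 φ t x = 0)
    (F B : SpaceTime → (Fin 3 → ℝ))
    (hF : ∀ (t : ℝ) (x : Fin 3 → ℝ) (j : Fin 3),
      F (t, x) j = -grad3 φ t x j - dt1 (fun p => A p j) t x)
    (hB : ∀ (t : ℝ) (x : Fin 3 → ℝ) (j : Fin 3), B (t, x) j = curl3 A t x j)
    (p : SpaceTime → (Fin 3 → ℝ)) (ρ : SpaceTime → ℝ)
    (hMH : ∀ (t : ℝ) (x : Fin 3 → ℝ) (j : Fin 3),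
      μg⁻¹ * curl3 B t x j - εg * dt1 (fun q => F q j) t x = -p (t, x) j)
    (hGauss : ∀ (t : ℝ) (x : Fin 3 → ℝ), εg * div3 F t x = -ρ (t, x)) :
    (∀ (t : ℝ) (x : Fin 3 → ℝ) (j : Fin 3),
      lap3 (fun q => A q j) t x - c⁻¹ ^ 2 * dt2 (fun q => A q j) t x
        = μg * p (t, x) j) ∧
    (∀ (t : ℝ) (x : Fin 3 → ℝ),
      lap3 φ t x - c⁻¹ ^ 2 * dt2 φ t x = 4 * Real.pi * G * ρ (t, x)) := by
  have hA2 : ContDiff ℝ 2 A := hA.of_le (WithTop.coe_le_coe.2 le_top)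
  have hφ2 : ContDiff ℝ 2 φ := hφ.of_le (WithTop.coe_le_coe.2 le_top)
  obtain rfl : B = uncurry (curl3 A) := funext fun q => funext (hB q.1 q.2)
  obtain rfl : F = fieldOfPotentials φ A := funext fun q => funext (hF q.1 q.2)
  have hLorenz : uncurry (div3 A) = fun q => -c⁻¹ ^ 2 * uncurry (dt1 φ) q :=
    funext fun (t, x) => by
      change div3 A t x = _ * dt1 φ t x
      linear_combination hgauge t x
  subst hμg hεg
  refine ⟨fun t x j => ?_, fun t x => ?_⟩
  · have h := hMH t x j
    rw [curl3_uncurry_curl3 hA2, dt1_fieldOfPotentials hφ2 hA2, hLorenz, grad3_const_mul] at h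
    field_simp at h ⊢
    linear_combination -h
  · have h := hGauss t x
    rw [div3_fieldOfPotentials hφ2 hA2, hLorenz, dt1_const_mul, dt1_uncurry_dt1] at h
    field_simp at h ⊢
    linear_combination -h

/-- the Maxwell–Heaviside equations for gravity in the Lorenz
gauge imply the wave equations `□Aⱼ = -μ_g pⱼ` and
`Δφ - c⁻²∂ₜ²φ = 4πGρ` (the relativistic Poisson equation). -/
theorem maxwell_heaviside_wave_equations
    (G c : ℝ) (hG : 0 < G) (hc : 0 < c)
    (μg εg : ℝ) (hμg : μg = 4 * Real.pi * G / c ^ 2)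
    (hεg : εg = 1 / (4 * Real.pi * G))
    (A : SpaceTime → (Fin 3 → ℝ)) (φ : SpaceTime → ℝ)
    (hA : ContDiff ℝ (⊤ : ℕ∞) A) (hφ : ContDiff ℝ (⊤ : ℕ∞) φ)
    (hgauge : ∀ (t : ℝ) (x : Fin 3 → ℝ),
      div3 A t x + c⁻¹ ^ 2 * dt1 φ t x = 0)
    (F B : SpaceTime → (Fin 3 → ℝ))
    (hF : ∀ (t : ℝ) (x : Fin 3 → ℝ) (j : Fin 3),
      F (t, x) j = -grad3 φ t x j - dt1 (fun p => A p j) t x)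
    (hB : ∀ (t : ℝ) (x : Fin 3 → ℝ) (j : Fin 3), B (t, x) j = curl3 A t x j)
    (p : SpaceTime → (Fin 3 → ℝ)) (ρ : SpaceTime → ℝ)
    (hp : ContDiff ℝ (⊤ : ℕ∞) p) (hρ : ContDiff ℝ (⊤ : ℕ∞) ρ)
    (hMH : ∀ (t : ℝ) (x : Fin 3 → ℝ) (j : Fin 3),
      μg⁻¹ * curl3 B t x j - εg * dt1 (fun q => F q j) t x = -p (t, x) j)
    (hGauss : ∀ (t : ℝ) (x : Fin 3 → ℝ), εg * div3 F t x = -ρ (t, x)) :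
    (∀ (t : ℝ) (x : Fin 3 → ℝ) (j : Fin 3),
      lap3 (fun q => A q j) t x - c⁻¹ ^ 2 * dt2 (fun q => A q j) t x
        = μg * p (t, x) j) ∧
    (∀ (t : ℝ) (x : Fin 3 → ℝ),
      lap3 φ t x - c⁻¹ ^ 2 * dt2 φ t x = 4 * Real.pi * G * ρ (t, x)) :=
  maxwell_heaviside_wave_equations_general G c hG hc μg εg hμg hεg A φ hA hφ hgauge F B hF hB p ρ
    hMH hGauss
end
end
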